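/- arXiv:2304.08450 — 3 statements merged into one kernel-verified Lean document; each statement's English description precedes it below -/
import Mathlib

section
/- Let H be a complex Hilbert space with dim H ≥ 2, and let a₁, a₂, b be three distinct atomic sentences. Then the distributive law fails for ⊨_H: it is not the case that b ∧ (a₁ ∨ a₂) ⊨_H (b ∧ a₁) ∨ (b ∧ a₂). -/
/-- Sentences generated from a countably infinite set of atoms by `∧`, `∨`, `¬`. -/
inductive Sentence : Type where
  | atom : ℕ → Sentence
  | conj : Sentence → Sentence → Sentence
  | disj : Sentence → Sentence → Sentence
  | neg  : Sentence → Sentence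

/-- A (bivalent) valuation: `true` = t, `false` = f. -/
abbrev SentVal : Type := Sentence → Bool

/-- An interpretation: a homomorphism of the language into the algebra of
closed subspaces of `H`, with `∧` as intersection, `∨` as closed linear span
and `¬` as orthogonal complement. -/
structure Interp (H : Type*) [NormedAddCommGroup H] [InnerProductSpace ℂ H]
    [CompleteSpace H] : Type _ where
  toFun : Sentence → Submodule ℂ H
  closed : ∀ a, IsClosed (toFun a : Set H)
  map_conj : ∀ a b, toFun (Sentence.conj a b) = toFun a ⊓ toFun b
  map_disj : ∀ a b, toFun (Sentence.disj a b) = (toFun a ⊔ toFun b).topologicalClosure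
  map_neg : ∀ a, toFun (Sentence.neg a) = (toFun a)ᗮ

/-- `CstarH H`: the class of valuations `v^{(i)}_P`, for interpretations `i` and
1-dimensional subspaces `P`, where `v^{(i)}_P a = t` iff `P ⊆ i a`. -/
def CstarH (H : Type*) [NormedAddCommGroup H] [InnerProductSpace ℂ H] [CompleteSpace H] :
    Set SentVal :=
  { v | ∃ (i : Interp H) (P : Submodule ℂ H), Module.finrank ℂ P = 1 ∧
      ∀ a, (v a = true ↔ P ≤ i.toFun a) }

/-- Quantum-logical consequence `Γ ⊨_H a`. -/
def QLconseq (H : Type*) [NormedAddCommGroup H] [InnerProductSpace ℂ H] [CompleteSpace H]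
    (Γ : Set Sentence) (a : Sentence) : Prop :=
  ∀ v ∈ CstarH H, (∀ γ ∈ Γ, v γ = true) → v a = true

/-- Extend an atomic assignment to all sentences. -/
noncomputable def interpFun {H : Type*} [NormedAddCommGroup H] [InnerProductSpace ℂ H]
    [CompleteSpace H] (f : ℕ → Submodule ℂ H) : Sentence → Submodule ℂ H
  | Sentence.atom k => f k
  | Sentence.conj a b => interpFun f a ⊓ interpFun f b
  | Sentence.disj a b => (interpFun f a ⊔ interpFun f b).topologicalClosure
  | Sentence.neg a => (interpFun f a)ᗮ

lemma interpFun_closed {H : Type*} [NormedAddCommGroup H] [InnerProductSpace ℂ H]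
    [CompleteSpace H] (f : ℕ → Submodule ℂ H) (hf : ∀ k, IsClosed ((f k : Set H)))
    (a : Sentence) : IsClosed ((interpFun f a : Set H)) := by
  induction a with
  | atom k => exact hf k
  | conj a b ha hb => exact ha.inter hb
  | disj a b ha hb => exact (interpFun f a ⊔ interpFun f b).isClosed_topologicalClosure
  | neg a ha => exact (interpFun f a).isClosed_orthogonal

/-- The interpretation extending an atomic assignment with closed values. -/
noncomputable def mkInterp {H : Type*} [NormedAddCommGroup H] [InnerProductSpace ℂ H]
    [CompleteSpace H] (f : ℕ → Submodule ℂ H) (hf : ∀ k, IsClosed ((f k : Set H))) :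
    Interp H where
  toFun := interpFun f
  closed := interpFun_closed f hf
  map_conj := fun _ _ => rfl
  map_disj := fun _ _ => rfl
  map_neg := fun _ => rfl

open Classical in
/-- for `dim H ≥ 2` and distinct atoms `a₁, a₂, b`, distributivity
fails: `b ∧ (a₁ ∨ a₂) ⊭_H (b ∧ a₁) ∨ (b ∧ a₂)`. -/
theorem stmt_7 (H : Type*) [NormedAddCommGroup H] [InnerProductSpace ℂ H]
    [CompleteSpace H] (hdim : 2 ≤ Module.rank ℂ H)
    (m₁ m₂ n : ℕ) (h₁₂ : m₁ ≠ m₂) (h₁ : m₁ ≠ n) (h₂ : m₂ ≠ n) :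
    ¬ QLconseq H
      {Sentence.conj (Sentence.atom n)
        (Sentence.disj (Sentence.atom m₁) (Sentence.atom m₂))}
      (Sentence.disj (Sentence.conj (Sentence.atom n) (Sentence.atom m₁))
        (Sentence.conj (Sentence.atom n) (Sentence.atom m₂))) := by
  -- two linearly independent vectors
  obtain ⟨s, hcard, hli⟩ := le_rank_iff_exists_linearIndependent_finset.mp hdim
  obtain ⟨x, y, hxy, hs⟩ := Finset.card_eq_two.mp hcard
  subst hs
  have hpair : ∀ a b : ℂ, a • x + b • y = 0 → a = 0 ∧ b = 0 := by
    intro a b hab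
    have he : Function.Injective (fun i : Fin 2 => (⟨if i = 0 then x else y, by
        fin_cases i <;> simp⟩ : (↑({x, y} : Finset H) : Set H))) := by
      intro i j hij
      fin_cases i <;> fin_cases j <;> simp_all
    have h2 : LinearIndependent ℂ ![x, y] := by
      have := hli.comp _ he
      convert this using 1
      funext i; fin_cases i <;> simp
      rfl
    exact LinearIndependent.pair_iff.mp h2 a b hab
  have hxy0 : x + y ≠ 0 := by
    intro h
    have := hpair 1 1 (by simpa using h)
    simpa using this.1
  -- the atomic assignment
  set P : Submodule ℂ H := Submodule.span ℂ {x + y} with hP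
  set f : ℕ → Submodule ℂ H := fun k =>
    if k = n then P else if k = m₁ then Submodule.span ℂ {x}
      else if k = m₂ then Submodule.span ℂ {y} else ⊥ with hfdef
  have hfc : ∀ k, IsClosed ((f k : Set H)) := by
    intro k
    simp only [hfdef]
    split_ifs <;> exact Submodule.closed_of_finiteDimensional _
  have hfn : f n = P := by simp [hfdef]
  have hfm₁ : f m₁ = Submodule.span ℂ {x} := by simp [hfdef, h₁]
  have hfm₂ : f m₂ = Submodule.span ℂ {y} := by simp [hfdef, h₂, h₁₂.symm]
  intro hcon
  have hv := hcon (fun a => decide (P ≤ interpFun f a))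
    ⟨mkInterp f hfc, P, finrank_span_singleton hxy0,
      fun a => by simp [mkInterp]⟩
  rw [decide_eq_true_iff] at hv
  -- the premise holds
  have hprem : P ≤ interpFun f
      (Sentence.conj (Sentence.atom n)
        (Sentence.disj (Sentence.atom m₁) (Sentence.atom m₂))) := by
    show P ≤ f n ⊓ (f m₁ ⊔ f m₂).topologicalClosure
    refine le_inf (le_of_eq hfn.symm) ?_
    refine le_trans ?_ (Submodule.le_topologicalClosure _)
    rw [hfm₁, hfm₂, hP, Submodule.span_le]
    intro z hz
    rw [Set.mem_singleton_iff] at hz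
    subst hz
    exact Submodule.add_mem _
      (Submodule.mem_sup_left (Submodule.mem_span_singleton_self x))
      (Submodule.mem_sup_right (Submodule.mem_span_singleton_self y))
  have hv2 := hv (by
    intro γ hγ
    rw [Set.mem_singleton_iff] at hγ
    subst hγ
    exact decide_eq_true_iff.mpr hprem)
  -- but the conclusion fails
  have hb₁ : f n ⊓ f m₁ = ⊥ := by
    rw [hfn, hfm₁, eq_bot_iff]
    rintro z ⟨hz1, hz2⟩
    obtain ⟨a, rfl⟩ := Submodule.mem_span_singleton.mp hz1
    obtain ⟨b, hb⟩ := Submodule.mem_span_singleton.mp hz2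
    have : (a - b) • x + a • y = 0 := by
      rw [sub_smul]
      rw [smul_add] at hb
      linear_combination (norm := module) -hb
    have ha0 := (hpair _ _ this).2
    simp [ha0]
  have hb₂ : f n ⊓ f m₂ = ⊥ := by
    rw [hfn, hfm₂, eq_bot_iff]
    rintro z ⟨hz1, hz2⟩
    obtain ⟨a, rfl⟩ := Submodule.mem_span_singleton.mp hz1
    obtain ⟨b, hb⟩ := Submodule.mem_span_singleton.mp hz2
    have : a • x + (a - b) • y = 0 := by
      rw [sub_smul]
      rw [smul_add] at hb
      linear_combination (norm := module) -hb
    have ha0 := (hpair _ _ this).1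
    simp [ha0]
  have hconc : interpFun f
      (Sentence.disj (Sentence.conj (Sentence.atom n) (Sentence.atom m₁))
        (Sentence.conj (Sentence.atom n) (Sentence.atom m₂))) = ⊥ := by
    show (f n ⊓ f m₁ ⊔ f n ⊓ f m₂).topologicalClosure = ⊥
    rw [hb₁, hb₂, sup_idem]
    exact le_antisymm (Submodule.topologicalClosure_minimal (⊥ : Submodule ℂ H) le_rfl
      (Submodule.closed_of_finiteDimensional _)) bot_le
  rw [hconc, le_bot_iff] at hv2
  have : (x + y) ∈ P := Submodule.mem_span_singleton_self (x + y)
  rw [hv2] at this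
  exact hxy0 (Submodule.mem_bot ℂ |>.mp this)
end

section
/- Let H be a complex Hilbert space with dim H ≥ 2, and let 𝓒^{(∨)}_H = { h_P ∘ i : i an interpretation, P ∈ C(H) \ {{0}, H} }, where h_P(Q) = f iff Q ⊆ P. Then 𝓒^{(∨)}_H makes disjunction truth-functional according to the classical truth table: for every v ∈ 𝓒^{(∨)}_H and all a, b ∈ S, v(a∨b) = f iff v(a) = v(b) = f. Moreover, 𝓒^{(∨)}_H makes conjunction and negation non-truth-functional. -/
/-- A class of valuations makes a binary connective truth-functional. -/
def MakesBinTF (C : Set SentVal) (op : Sentence → Sentence → Sentence) : Prop :=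
  ∃ f : Bool → Bool → Bool, ∀ v ∈ C, ∀ a b, v (op a b) = f (v a) (v b)

/-- A class of valuations makes negation truth-functional. -/
def MakesNegTF (C : Set SentVal) : Prop :=
  ∃ f : Bool → Bool, ∀ v ∈ C, ∀ a, v (Sentence.neg a) = f (v a)

/-- The class `𝓒^{(∨)}_H` of valuations `h_P ∘ i`, where `h_P Q = f` iff `Q ⊆ P`,
for `P` a closed subspace of `H` other than `{0}` and `H`. -/
def Cvee (H : Type*) [NormedAddCommGroup H] [InnerProductSpace ℂ H] [CompleteSpace H] :
    Set SentVal :=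
  { v | ∃ (i : Interp H) (P : Submodule ℂ H), IsClosed (P : Set H) ∧ P ≠ ⊥ ∧ P ≠ ⊤ ∧
      ∀ a, (v a = false ↔ i.toFun a ≤ P) }

open scoped ComplexInnerProductSpace

noncomputable section SB
open Submodule

set_option linter.unusedSectionVars false

variable {H : Type*} [NormedAddCommGroup H] [InnerProductSpace ℂ H] [CompleteSpace H]

def ifun (g : ℕ → Submodule ℂ H) : Sentence → Submodule ℂ H
  | .atom n => g n
  | .conj a b => ifun g a ⊓ ifun g b
  | .disj a b => (ifun g a ⊔ ifun g b).topologicalClosure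
  | .neg a => (ifun g a)ᗮ

lemma ifun_closed (g : ℕ → Submodule ℂ H) (hg : ∀ n, IsClosed ((g n : Set H))) :
    ∀ a, IsClosed ((ifun g a : Set H))
  | .atom n => hg n
  | .conj a b => by
      have := (ifun_closed g hg a).inter (ifun_closed g hg b)
      simpa [ifun, Submodule.coe_inf] using this
  | .disj a b => (ifun g a ⊔ ifun g b).isClosed_topologicalClosure
  | .neg a => (ifun g a).isClosed_orthogonal

def interpOf (g : ℕ → Submodule ℂ H) (hg : ∀ n, IsClosed ((g n : Set H))) : Interp H :=
  ⟨ifun g, ifun_closed g hg, fun _ _ => rfl, fun _ _ => rfl, fun _ => rfl⟩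

open scoped Classical in
def valOf (g : ℕ → Submodule ℂ H) (P : Submodule ℂ H) : SentVal :=
  fun a => if ifun g a ≤ P then false else true

lemma valOf_false_iff (g : ℕ → Submodule ℂ H) (P : Submodule ℂ H) (a : Sentence) :
    valOf g P a = false ↔ ifun g a ≤ P := by
  classical
  by_cases h : ifun g a ≤ P <;> simp [valOf, h]

lemma valOf_true_iff (g : ℕ → Submodule ℂ H) (P : Submodule ℂ H) (a : Sentence) :
    valOf g P a = true ↔ ¬ ifun g a ≤ P := by
  classical
  by_cases h : ifun g a ≤ P <;> simp [valOf, h]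

lemma valOf_mem_Cvee (g : ℕ → Submodule ℂ H) (hg : ∀ n, IsClosed ((g n : Set H)))
    (P : Submodule ℂ H) (hPc : IsClosed (P : Set H)) (hb : P ≠ ⊥) (ht : P ≠ ⊤) :
    valOf g P ∈ Cvee H :=
  ⟨interpOf g hg, P, hPc, hb, ht, fun a => valOf_false_iff g P a⟩

end SB

/-- for `dim H ≥ 2`, `𝓒^{(∨)}_H` makes disjunction
truth-functional with its classical truth table, but makes conjunction and
negation non-truth-functional. -/
theorem stmt_11 (H : Type*) [NormedAddCommGroup H] [InnerProductSpace ℂ H]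
    [CompleteSpace H] (hdim : 2 ≤ Module.rank ℂ H) :
    (∀ v ∈ Cvee H, ∀ a b,
      (v (Sentence.disj a b) = false ↔ (v a = false ∧ v b = false))) ∧
    MakesBinTF (Cvee H) Sentence.disj ∧
    ¬ MakesBinTF (Cvee H) Sentence.conj ∧
    ¬ MakesNegTF (Cvee H) := by
  classical
  -- Part 1
  have part1 : ∀ v ∈ Cvee H, ∀ a b,
      (v (Sentence.disj a b) = false ↔ (v a = false ∧ v b = false)) := by
    rintro v ⟨i, P, hPc, -, -, hv⟩ a b
    rw [hv, hv, hv, i.map_disj, ← sup_le_iff]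
    constructor
    · intro h
      exact fun x hx => h (Submodule.le_topologicalClosure (i.toFun a ⊔ i.toFun b) hx)
    · intro h
      exact Submodule.topologicalClosure_minimal _ h hPc
  -- setup: two orthogonal nonzero vectors
  have hnt : Nontrivial H := by
    rcases subsingleton_or_nontrivial H with hs | hn
    · exfalso
      have h0 : Module.rank ℂ H = 0 := rank_subsingleton' ℂ H
      rw [h0] at hdim
      have := lt_of_lt_of_le (show (0:Cardinal) < 2 by norm_num) hdim
      exact absurd this (lt_irrefl 0)
    · exact hn
  obtain ⟨e₀, he₀⟩ := exists_ne (0 : H)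
  set A : Submodule ℂ H := Submodule.span ℂ {e₀} with hA
  have hAc : IsClosed (A : Set H) := Submodule.closed_of_finiteDimensional _
  have hAtop : A ≠ ⊤ := by
    intro h
    have h1 : Module.rank ℂ A ≤ 1 := by
      simpa using rank_span_le (R := ℂ) ({e₀} : Set H)
    rw [h, rank_top] at h1
    have := le_trans hdim h1
    norm_num at this
  have hAorth : Aᗮ ≠ ⊥ := fun h => hAtop (Submodule.orthogonal_eq_bot_iff.mp h)
  obtain ⟨e₁, he₁A, he₁⟩ := Submodule.exists_mem_ne_zero_of_ne_bot hAorth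
  have horth : ⟪e₀, e₁⟫ = 0 :=
    (Submodule.mem_orthogonal A e₁).mp he₁A e₀ (Submodule.mem_span_singleton_self e₀)
  have horth' : ⟪e₁, e₀⟫ = 0 := by
    rw [← inner_conj_symm, horth, map_zero]
  have he₀n : ⟪e₀, e₀⟫ ≠ 0 := fun h => he₀ (inner_self_eq_zero.mp h)
  have he₁n : ⟪e₁, e₁⟫ ≠ 0 := fun h => he₁ (inner_self_eq_zero.mp h)
  set B : Submodule ℂ H := Submodule.span ℂ {e₁} with hB
  set C : Submodule ℂ H := Submodule.span ℂ {e₀ + e₁} with hC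
  have hBc : IsClosed (B : Set H) := Submodule.closed_of_finiteDimensional _
  have hCc : IsClosed (C : Set H) := Submodule.closed_of_finiteDimensional _
  have he₁nA : e₁ ∉ A := by
    intro h
    obtain ⟨c, hc⟩ := Submodule.mem_span_singleton.mp h
    have h2 : ⟪e₀, c • e₀⟫ = ⟪e₀, e₁⟫ := by rw [hc]
    rw [inner_smul_right, horth] at h2
    rcases mul_eq_zero.mp h2 with h1 | h1
    · rw [h1, zero_smul] at hc; exact he₁ hc.symm
    · exact he₀n h1
  have he₀nB : e₀ ∉ B := by
    intro h
    obtain ⟨c, hc⟩ := Submodule.mem_span_singleton.mp h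
    have h2 : ⟪e₁, c • e₁⟫ = ⟪e₁, e₀⟫ := by rw [hc]
    rw [inner_smul_right, horth'] at h2
    rcases mul_eq_zero.mp h2 with h1 | h1
    · rw [h1, zero_smul] at hc; exact he₀ hc.symm
    · exact he₁n h1
  have he₀nC : e₀ ∉ C := by
    intro h
    obtain ⟨c, hc⟩ := Submodule.mem_span_singleton.mp h
    have h2 : ⟪e₁, c • (e₀ + e₁)⟫ = ⟪e₁, e₀⟫ := by rw [hc]
    rw [inner_smul_right, inner_add_right, horth', zero_add] at h2
    rcases mul_eq_zero.mp h2 with h1 | h1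
    · rw [h1, zero_smul] at hc; exact he₀ hc.symm
    · exact he₁n h1
  have he₁nC : e₁ ∉ C := by
    intro h
    obtain ⟨c, hc⟩ := Submodule.mem_span_singleton.mp h
    have h2 : ⟪e₀, c • (e₀ + e₁)⟫ = ⟪e₀, e₁⟫ := by rw [hc]
    rw [inner_smul_right, inner_add_right, horth, add_zero] at h2
    rcases mul_eq_zero.mp h2 with h1 | h1
    · rw [h1, zero_smul] at hc; exact he₁ hc.symm
    · exact he₀n h1
  have hABn : ¬ B ≤ A := fun h => he₁nA (h (Submodule.mem_span_singleton_self e₁))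
  have hCAn : ¬ C ≤ A := by
    intro h
    obtain ⟨c, hc⟩ := Submodule.mem_span_singleton.mp
      (h (Submodule.mem_span_singleton_self (e₀ + e₁)))
    apply he₁n
    have h2 : ⟪e₁, c • e₀⟫ = ⟪e₁, e₀ + e₁⟫ := by rw [hc]
    rw [inner_smul_right, inner_add_right, horth', mul_zero, zero_add] at h2
    exact h2.symm
  have hAbot : A ≠ ⊥ := by
    intro h
    exact he₀ ((Submodule.mem_bot ℂ).mp (h ▸ Submodule.mem_span_singleton_self e₀))
  have hBbot : B ≠ ⊥ := by
    intro h
    exact he₁ ((Submodule.mem_bot ℂ).mp (h ▸ Submodule.mem_span_singleton_self e₁))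
  have he01 : e₀ + e₁ ≠ 0 := by
    intro h
    apply he₀n
    have h2 : ⟪e₀, e₀ + e₁⟫ = 0 := by rw [h, inner_zero_right]
    rwa [inner_add_right, horth, add_zero] at h2
  have hCbot : C ≠ ⊥ := by
    intro h
    exact he01 ((Submodule.mem_bot ℂ).mp (h ▸ Submodule.mem_span_singleton_self _))
  have hCtop : C ≠ ⊤ := fun h => he₀nC (h ▸ Submodule.mem_top)
  have hBtop : B ≠ ⊤ := fun h => he₀nB (h ▸ Submodule.mem_top)
  have hBCbot : B ⊓ C ≤ A := by
    intro x hx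
    obtain ⟨a, ha⟩ := Submodule.mem_span_singleton.mp hx.1
    obtain ⟨b, hb⟩ := Submodule.mem_span_singleton.mp hx.2
    have hx0 : x = 0 := by
      have h1 : ⟪e₀, a • e₁⟫ = ⟪e₀, x⟫ := by rw [ha]
      have h2 : ⟪e₀, b • (e₀ + e₁)⟫ = ⟪e₀, x⟫ := by rw [hb]
      rw [inner_smul_right, horth, mul_zero] at h1
      rw [inner_smul_right, inner_add_right, horth, add_zero] at h2
      have hb0 : b = 0 := by
        rcases mul_eq_zero.mp (h2.trans h1.symm) with h | h
        · exact h
        · exact absurd h he₀n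
      rw [hb0, zero_smul] at hb
      exact hb.symm
    rw [hx0]; exact Submodule.zero_mem A
  have hBorthB : ¬ B ≤ Bᗮ := by
    intro h
    exact he₁n ((Submodule.mem_orthogonal B e₁).mp
      (h (Submodule.mem_span_singleton_self e₁)) e₁ (Submodule.mem_span_singleton_self e₁))
  have he₀Borth : e₀ ∈ Bᗮ := by
    rw [Submodule.mem_orthogonal]
    intro u hu
    obtain ⟨c, hc⟩ := Submodule.mem_span_singleton.mp hu
    rw [← hc, inner_smul_left, horth', mul_zero]
  have hBorthBot : Bᗮ ≠ ⊥ := by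
    intro h
    rw [h] at he₀Borth
    exact he₀ ((Submodule.mem_bot ℂ).mp he₀Borth)
  have hBorthTop : Bᗮ ≠ ⊤ := by
    intro h
    have h1 : e₁ ∈ Bᗮ := h ▸ Submodule.mem_top
    exact he₁n ((Submodule.mem_orthogonal B e₁).mp h1 e₁
      (Submodule.mem_span_singleton_self e₁))
  have hAorthC : ¬ Aᗮ ≤ C := fun h => he₁nC (h he₁A)
  have hAnC : ¬ A ≤ C := fun h => he₀nC (h (Submodule.mem_span_singleton_self e₀))
  refine ⟨part1, ⟨fun x y => x || y, ?_⟩, ?_, ?_⟩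
  · -- disjunction truth-functional
    intro v hv a b
    have h := part1 v hv a b
    cases ha : v a <;> cases hb : v b <;>
      simp only [ha, hb, Bool.or_self, Bool.or_false, Bool.false_or, Bool.or_true, Bool.true_or]
    · exact h.mpr ⟨ha, hb⟩
    all_goals (
      cases hd : v (Sentence.disj a b)
      · obtain ⟨h1, h2⟩ := h.mp hd
        first
          | (rw [ha] at h1; exact Bool.noConfusion h1)
          | (rw [hb] at h2; exact Bool.noConfusion h2)
      · rfl)
  · -- conjunction not truth-functional
    rintro ⟨f, hf⟩
    have hv1 := hf (valOf (fun _ => B) A)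
      (valOf_mem_Cvee _ (fun _ => hBc) A hAc hAbot hAtop) (.atom 0) (.atom 1)
    have hv2 := hf (valOf (fun n => if n = 0 then B else C) A)
      (valOf_mem_Cvee _ (fun n => by by_cases h : n = 0 <;> simp [h, hBc, hCc])
        A hAc hAbot hAtop) (.atom 0) (.atom 1)
    have e1t : valOf (fun _ => B) A (.atom 0) = true :=
      (valOf_true_iff _ _ _).mpr hABn
    have e1t' : valOf (fun _ => B) A (.atom 1) = true :=
      (valOf_true_iff _ _ _).mpr hABn
    have e1c : valOf (fun _ => B) A (.conj (.atom 0) (.atom 1)) = true := by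
      rw [valOf_true_iff]
      show ¬ (B ⊓ B) ≤ A
      rw [inf_idem]
      exact hABn
    have e2t : valOf (fun n => if n = 0 then B else C) A (.atom 0) = true := by
      rw [valOf_true_iff]
      show ¬ (if (0:ℕ) = 0 then B else C) ≤ A
      simpa using hABn
    have e2t' : valOf (fun n => if n = 0 then B else C) A (.atom 1) = true := by
      rw [valOf_true_iff]
      show ¬ (if (1:ℕ) = 0 then B else C) ≤ A
      simpa using hCAn
    have e2c : valOf (fun n => if n = 0 then B else C) A (.conj (.atom 0) (.atom 1)) = false := by
      rw [valOf_false_iff]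
      show ((if (0:ℕ) = 0 then B else C) ⊓ (if (1:ℕ) = 0 then B else C)) ≤ A
      simpa using hBCbot
    rw [e1t, e1t', e1c] at hv1
    rw [e2t, e2t', e2c] at hv2
    exact Bool.noConfusion (hv2.trans hv1.symm)
  · -- negation not truth-functional
    rintro ⟨f, hf⟩
    have hv3 := hf (valOf (fun _ => B) Bᗮ)
      (valOf_mem_Cvee _ (fun _ => hBc) Bᗮ B.isClosed_orthogonal hBorthBot hBorthTop)
      (.atom 0)
    have hv4 := hf (valOf (fun _ => A) C)
      (valOf_mem_Cvee _ (fun _ => hAc) C hCc hCbot hCtop) (.atom 0)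
    have e3t : valOf (fun _ => B) Bᗮ (.atom 0) = true :=
      (valOf_true_iff _ _ _).mpr hBorthB
    have e3n : valOf (fun _ => B) Bᗮ (.neg (.atom 0)) = false := by
      rw [valOf_false_iff]
      show Bᗮ ≤ Bᗮ
      exact le_rfl
    have e4t : valOf (fun _ => A) C (.atom 0) = true :=
      (valOf_true_iff _ _ _).mpr hAnC
    have e4n : valOf (fun _ => A) C (.neg (.atom 0)) = true := by
      rw [valOf_true_iff]
      show ¬ Aᗮ ≤ C
      exact hAorthC
    rw [e3t, e3n] at hv3
    rw [e4t, e4n] at hv4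
    exact Bool.noConfusion (hv3.trans hv4.symm)
end

section
/- For each connective c ∈ {∧, ∨, ¬}, there exists a CL-klass of valuations that makes c non-truth-functional. In particular, C*_CL ∪ {ṽ_CL} is a CL-klass making disjunction and negation non-TF, and C*_CL ∪ {ṽ'_CL} is a CL-klass making conjunction non-TF, where ṽ_CL(a) = t iff ⊨_CL a and ṽ'_CL(a) = f iff ⊨_CL ¬a. -/
/-- The class `C*_CL` of all classical (truth-table) valuations. -/
def CstarCL : Set SentVal :=
  { v | (∀ a b, (v (Sentence.conj a b) = true ↔ (v a = true ∧ v b = true))) ∧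
        (∀ a b, (v (Sentence.disj a b) = false ↔ (v a = false ∧ v b = false))) ∧
        (∀ a, (v (Sentence.neg a) = true ↔ v a = false)) }

/-- Classical consequence `Γ ⊨_CL a`. -/
def CLconseq (Γ : Set Sentence) (a : Sentence) : Prop :=
  ∀ v ∈ CstarCL, (∀ γ ∈ Γ, v γ = true) → v a = true

/-- `⊨_CL a`: `a` is a classical tautology. -/
def CLvalid (a : Sentence) : Prop := ∀ v ∈ CstarCL, v a = true

/-- Carnap's non-standard valuation `ṽ_CL`: `ṽ_CL a = t` iff `a` is a classical
tautology. -/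
noncomputable def tildeVCL : SentVal :=
  fun a => @decide (CLvalid a) (Classical.propDecidable _)

/-- The non-standard valuation `ṽ'_CL`: `ṽ'_CL a = f` iff `a` is a classical
falsehood (i.e. `⊨_CL ¬a`), and `ṽ'_CL a = t` otherwise. -/
noncomputable def tildeVCL' : SentVal :=
  fun a => !(@decide (CLvalid (Sentence.neg a)) (Classical.propDecidable _))

/-- The conjunction of the members of a nonempty finite list of sentences
(the value on `[]` is an irrelevant dummy). -/
def conjList : List Sentence → Sentence
  | [] => Sentence.atom 0
  | [a] => a
  | a :: b :: l => Sentence.conj a (conjList (b :: l))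

/-- A CL-klass: for finite nonempty premise sets, validity is explicated via
the truth of the conjunction of the premises. -/
def IsCLKlass (K : Set SentVal) : Prop :=
  ∀ (Γ : List Sentence), Γ ≠ [] → ∀ a : Sentence,
    (CLconseq {γ | γ ∈ Γ} a ↔ (∀ v ∈ K, v (conjList Γ) = true → v a = true))

def evalV (u : ℕ → Bool) : Sentence → Bool
  | .atom n => u n
  | .conj a b => evalV u a && evalV u b
  | .disj a b => evalV u a || evalV u b
  | .neg a => !(evalV u a)

lemma evalV_mem (u : ℕ → Bool) : evalV u ∈ CstarCL := by
  refine ⟨fun a b => ?_, fun a b => ?_, fun a => ?_⟩ <;> simp [evalV]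

lemma tilde_true_iff (a : Sentence) : tildeVCL a = true ↔ CLvalid a := by
  simp [tildeVCL]

lemma tilde'_true_iff (a : Sentence) :
    tildeVCL' a = true ↔ ¬ CLvalid (Sentence.neg a) := by
  simp [tildeVCL']

lemma tilde_false_of (a : Sentence) (h : ¬ CLvalid a) : tildeVCL a = false := by
  rcases hx : tildeVCL a with _|_
  · rfl
  · exact absurd ((tilde_true_iff a).mp hx) h

lemma tilde'_true_of (a : Sentence) (h : ¬ CLvalid (Sentence.neg a)) :
    tildeVCL' a = true := (tilde'_true_iff a).mpr h

lemma tilde'_false_of (a : Sentence) (h : CLvalid (Sentence.neg a)) :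
    tildeVCL' a = false := by
  rcases hx : tildeVCL' a with _|_
  · rfl
  · exact absurd h ((tilde'_true_iff a).mp hx)

lemma conjList_true {v : SentVal} (hv : v ∈ CstarCL) :
    ∀ (Γ : List Sentence), Γ ≠ [] →
      (v (conjList Γ) = true ↔ ∀ γ ∈ Γ, v γ = true)
  | [], h => absurd rfl h
  | [a], _ => by simp [conjList]
  | a :: b :: l, _ => by
    have ih := conjList_true hv (b :: l) (by simp)
    simp [conjList, hv.1, ih]

lemma neg_false {v : SentVal} (hv : v ∈ CstarCL) (a : Sentence) :
    v (Sentence.neg a) = false ↔ v a = true := by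
  have := hv.2.2 a
  rcases h : v a with _ | _ <;> rcases h2 : v (Sentence.neg a) with _ | _ <;>
    simp_all

lemma disj_tauto (a : Sentence) : CLvalid (Sentence.disj a (Sentence.neg a)) := by
  intro v hv
  rcases h : v (Sentence.disj a (Sentence.neg a)) with _ | _
  · exfalso
    have h2 := (hv.2.1 a (Sentence.neg a)).mp h
    have := (neg_false hv a).mp h2.2
    simp_all
  · rfl

lemma negconj_tauto (a : Sentence) :
    CLvalid (Sentence.neg (Sentence.conj a (Sentence.neg a))) := by
  intro v hv
  rw [hv.2.2]
  rcases h : v (Sentence.conj a (Sentence.neg a)) with _ | _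
  · rfl
  · exfalso
    have h2 := (hv.1 a (Sentence.neg a)).mp h
    have := (hv.2.2 a).mp h2.2
    simp_all

lemma not_valid_atom (n : ℕ) : ¬ CLvalid (Sentence.atom n) := fun h => by
  have := h (evalV fun _ => false) (evalV_mem _)
  simp [evalV] at this

lemma not_valid_neg_atom (n : ℕ) :
    ¬ CLvalid (Sentence.neg (Sentence.atom n)) := fun h => by
  have := h (evalV fun _ => true) (evalV_mem _)
  simp [evalV] at this

lemma not_valid_disj01 :
    ¬ CLvalid (Sentence.disj (Sentence.atom 0) (Sentence.atom 1)) := fun h => by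
  have := h (evalV fun _ => false) (evalV_mem _)
  simp [evalV] at this

lemma not_valid_conj_contr :
    ¬ CLvalid (Sentence.conj (Sentence.atom 0) (Sentence.neg (Sentence.atom 0))) :=
  fun h => by
  have := h (evalV fun _ => false) (evalV_mem _)
  simp [evalV] at this

lemma not_valid_negneg_atom0 :
    ¬ CLvalid (Sentence.neg (Sentence.neg (Sentence.atom 0))) := fun h => by
  have := h (evalV fun _ => false) (evalV_mem _)
  simp [evalV] at this

lemma not_valid_neg_conj01 :
    ¬ CLvalid (Sentence.neg (Sentence.conj (Sentence.atom 0) (Sentence.atom 1))) :=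
  fun h => by
  have := h (evalV fun _ => true) (evalV_mem _)
  simp [evalV] at this

lemma klass_tilde : IsCLKlass (CstarCL ∪ {tildeVCL}) := by
  intro Γ hΓ a
  constructor
  · rintro h v (hv | hv) hconj
    · exact h v hv ((conjList_true hv Γ hΓ).mp hconj)
    · rcases hv with rfl
      rw [tilde_true_iff] at hconj ⊢
      intro w hw
      exact h w hw ((conjList_true hw Γ hΓ).mp (hconj w hw))
  · intro h v hv hall
    exact h v (Or.inl hv) ((conjList_true hv Γ hΓ).mpr hall)

lemma klass_tilde' : IsCLKlass (CstarCL ∪ {tildeVCL'}) := by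
  intro Γ hΓ a
  constructor
  · rintro h v (hv | hv) hconj
    · exact h v hv ((conjList_true hv Γ hΓ).mp hconj)
    · rcases hv with rfl
      rw [tilde'_true_iff] at hconj ⊢
      intro hval
      apply hconj
      intro w hw
      rw [hw.2.2]
      rcases hc : w (conjList Γ) with _|_
      · rfl
      · exfalso
        have ha := h w hw ((conjList_true hw Γ hΓ).mp hc)
        have := (hw.2.2 a).mp (hval w hw)
        simp_all
  · intro h v hv hall
    exact h v (Or.inl hv) ((conjList_true hv Γ hΓ).mpr hall)

lemma notTF_disj : ¬ MakesBinTF (CstarCL ∪ {tildeVCL}) Sentence.disj := by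
  rintro ⟨f, hf⟩
  have memT : tildeVCL ∈ CstarCL ∪ {tildeVCL} := Or.inr rfl
  have h1 := hf tildeVCL memT (Sentence.atom 0) (Sentence.neg (Sentence.atom 0))
  have h2 := hf tildeVCL memT (Sentence.atom 0) (Sentence.atom 1)
  rw [(tilde_true_iff _).mpr (disj_tauto _),
      tilde_false_of _ (not_valid_atom 0),
      tilde_false_of _ (not_valid_neg_atom 0)] at h1
  rw [tilde_false_of _ not_valid_disj01,
      tilde_false_of _ (not_valid_atom 0),
      tilde_false_of _ (not_valid_atom 1)] at h2
  rw [← h1] at h2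
  exact Bool.true_eq_false.mp h2.symm

lemma notTF_neg : ¬ MakesNegTF (CstarCL ∪ {tildeVCL}) := by
  rintro ⟨f, hf⟩
  have memT : tildeVCL ∈ CstarCL ∪ {tildeVCL} := Or.inr rfl
  have h1 := hf tildeVCL memT (Sentence.atom 0)
  have h2 := hf tildeVCL memT
    (Sentence.conj (Sentence.atom 0) (Sentence.neg (Sentence.atom 0)))
  rw [tilde_false_of _ (not_valid_neg_atom 0),
      tilde_false_of _ (not_valid_atom 0)] at h1
  rw [(tilde_true_iff _).mpr (negconj_tauto _),
      tilde_false_of _ not_valid_conj_contr] at h2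
  rw [← h2] at h1
  exact Bool.true_eq_false.mp h1.symm

lemma notTF_conj : ¬ MakesBinTF (CstarCL ∪ {tildeVCL'}) Sentence.conj := by
  rintro ⟨f, hf⟩
  have memT : tildeVCL' ∈ CstarCL ∪ {tildeVCL'} := Or.inr rfl
  have h1 := hf tildeVCL' memT (Sentence.atom 0) (Sentence.neg (Sentence.atom 0))
  have h2 := hf tildeVCL' memT (Sentence.atom 0) (Sentence.atom 1)
  rw [tilde'_false_of _ (negconj_tauto _),
      tilde'_true_of _ (not_valid_neg_atom 0),
      tilde'_true_of _ not_valid_negneg_atom0] at h1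
  rw [tilde'_true_of _ not_valid_neg_conj01,
      tilde'_true_of _ (not_valid_neg_atom 0),
      tilde'_true_of _ (not_valid_neg_atom 1)] at h2
  rw [← h2] at h1
  exact Bool.true_eq_false.mp h1.symm

/-- for each connective `c ∈ {∧, ∨, ¬}` there is a CL-klass
making `c` non-truth-functional: `C*_CL ∪ {ṽ_CL}` is a CL-klass making `∨` and
`¬` non-TF, and `C*_CL ∪ {ṽ'_CL}` is a CL-klass making `∧` non-TF. -/
theorem stmt_15 :
    (∃ K : Set SentVal, IsCLKlass K ∧ ¬ MakesBinTF K Sentence.conj) ∧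
    (∃ K : Set SentVal, IsCLKlass K ∧ ¬ MakesBinTF K Sentence.disj) ∧
    (∃ K : Set SentVal, IsCLKlass K ∧ ¬ MakesNegTF K) ∧
    (IsCLKlass (CstarCL ∪ {tildeVCL}) ∧
      ¬ MakesBinTF (CstarCL ∪ {tildeVCL}) Sentence.disj ∧
      ¬ MakesNegTF (CstarCL ∪ {tildeVCL})) ∧
    (IsCLKlass (CstarCL ∪ {tildeVCL'}) ∧
      ¬ MakesBinTF (CstarCL ∪ {tildeVCL'}) Sentence.conj) := by
  exact ⟨⟨_, klass_tilde', notTF_conj⟩, ⟨_, klass_tilde, notTF_disj⟩,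
    ⟨_, klass_tilde, notTF_neg⟩, ⟨klass_tilde, notTF_disj, notTF_neg⟩,
    ⟨klass_tilde', notTF_conj⟩⟩
end
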